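/- For all c>0 and μ∈ℝ\{0}, ∂_c E_μ[Q_{c,μ}] = −c^{3/2}/(c+2μ²), which is strictly negative. -/

import Mathlib

/-!
Differentiate term by term. With `q = c + 2μ²`, the three terms contribute `-√c`, `2μ²/√c` and
`-4μ⁴/(√c q)`, whose sum is `(-c q + 2μ² q - 4μ⁴)/(√c q) = -c²/(√c q) = -c^{3/2}/q`.
-/

open Real

/-- Energy of the Gardner soliton as a function of the scaling `c`. -/
noncomputable def gardnerSolitonEnergy (μ c : ℝ) : ℝ :=
  -(2 / 3) * c ^ ((3 : ℝ) / 2) + 4 * μ ^ 2 * Real.sqrt c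
    - 4 * Real.sqrt 2 * μ ^ 3 * Real.arctan (Real.sqrt c / (Real.sqrt 2 * μ))

lemma Real.rpow_three_halves_eq_mul_sqrt {x : ℝ} (hx : 0 ≤ x) : x ^ ((3 : ℝ) / 2) = x * √x := by
  rw [show (3 : ℝ) / 2 = 1 + 1 / 2 by norm_num, rpow_add' hx (by norm_num), rpow_one,
    sqrt_eq_rpow]

lemma Real.hasDerivAt_rpow_three_halves (x : ℝ) :
    HasDerivAt (fun y : ℝ => y ^ ((3 : ℝ) / 2)) (3 / 2 * √x) x := by
  convert hasDerivAt_rpow_const (x := x) (p := 3 / 2) (Or.inr (by norm_num)) using 2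
  rw [sqrt_eq_rpow]
  norm_num

lemma Real.hasDerivAt_arctan_sqrt_div (a : ℝ) {x : ℝ} (hx : 0 < x) :
    HasDerivAt (fun y => arctan (√y / a)) (a / (2 * √x * (a ^ 2 + x))) x := by
  convert ((hasDerivAt_sqrt hx.ne').div_const a).arctan using 1
  rcases eq_or_ne a 0 with rfl | ha
  · -- `√y / 0 = 0`, so both sides vanish
    simp
  · have hsx : 0 < √x := sqrt_pos.2 hx
    rw [div_pow, sq_sqrt hx.le]
    field_simp

lemma hasDerivAt_gardnerSolitonEnergy (μ : ℝ) {c : ℝ} (hc : 0 < c) :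
    HasDerivAt (gardnerSolitonEnergy μ) (-(c ^ ((3 : ℝ) / 2)) / (c + 2 * μ ^ 2)) c := by
  have hs2 : √2 ^ 2 = 2 := sq_sqrt zero_le_two
  refine ((((hasDerivAt_rpow_three_halves c).const_mul (-(2 / 3))).add
    ((hasDerivAt_sqrt hc.ne').const_mul (4 * μ ^ 2))).sub
    ((hasDerivAt_arctan_sqrt_div (√2 * μ) hc).const_mul (4 * √2 * μ ^ 3))).congr_deriv ?_
  rw [rpow_three_halves_eq_mul_sqrt hc.le, mul_pow, hs2]
  field_simp
  simp only [sq_sqrt hc.le, hs2]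
  ring

theorem gardner_soliton_weinstein_energy_general (c μ : ℝ) (hc : 0 < c) :
    HasDerivAt (gardnerSolitonEnergy μ) (-(c ^ ((3 : ℝ) / 2)) / (c + 2 * μ ^ 2)) c ∧
    -(c ^ ((3 : ℝ) / 2)) / (c + 2 * μ ^ 2) < 0 :=
  ⟨hasDerivAt_gardnerSolitonEnergy μ hc,
    div_neg_of_neg_of_pos (neg_neg_of_pos (rpow_pos_of_pos hc _)) (by positivity)⟩

theorem gardner_soliton_weinstein_energy (c μ : ℝ) (hc : 0 < c) (hμ : μ ≠ 0) :
    HasDerivAt (gardnerSolitonEnergy μ) (-(c ^ ((3 : ℝ) / 2)) / (c + 2 * μ ^ 2)) c ∧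
    -(c ^ ((3 : ℝ) / 2)) / (c + 2 * μ ^ 2) < 0 :=
  gardner_soliton_weinstein_energy_general c μ hc
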